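/- Let f_1, …, f_N : ℝ^d → ℝ be convex differentiable functions whose gradients are each L-Lipschitz continuous, let f = (1/N)·Σ_{i=1}^N f_i, let w* be a global minimizer of f, and let α > 0. Then for every w, w̃ ∈ ℝ^d, (1/N)·Σ_{i=1}^N ‖w − α(∇f_i(w) − ∇f_i(w̃) + ∇f(w̃)) − w*‖² ≤ ‖w − w*‖² − 2α(1 − 2Lα)·(f(w) − f(w*)) + 4Lα²·(f(w̃) − f(w*)). -/

import Mathlib

/-!
The SVRG direction `vᵢ = ∇fᵢ(w) - ∇fᵢ(w̃) + ∇f(w̃)` averages to `∇f(w)`, so expanding the square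
gives `‖w - w*‖² - 2α⟪w - w*, ∇f(w)⟫ + α² · avgᵢ ‖vᵢ‖²`, and convexity bounds the inner product
below by `f(w) - f(w*)`. Since `∇f(w*) = 0`, we have `vᵢ = pᵢ - (qᵢ - avg q)` with
`pᵢ = ∇fᵢ(w) - ∇fᵢ(w*)` and `qᵢ = ∇fᵢ(w̃) - ∇fᵢ(w*)`. Hence `avgᵢ ‖vᵢ‖² ≤ 2 avg ‖p‖² + 2 avg ‖q‖²`
(a variance is at most the second moment), and cocoercivity of `L`-smooth convex functions,
`‖∇g(x) - ∇g(y)‖² ≤ 2L (g(x) - g(y) - ⟪∇g(y), x - y⟫)`, averaged at `y = w*`, bounds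
`avg ‖p‖²` by `2L (f(w) - f(w*))` and `avg ‖q‖²` by `2L (f(w̃) - f(w*))`.
-/

open InnerProductSpace Set Finset
open scoped RealInnerProductSpace Gradient

variable {E : Type*} [NormedAddCommGroup E] [InnerProductSpace ℝ E]

section VectorAverage

variable {ι : Type*} [Fintype ι]

theorem inv_card_mul_sum_norm_sub_smul_sq [Nonempty ι] (a : E) (α : ℝ) (v : ι → E) :
    (Fintype.card ι : ℝ)⁻¹ * ∑ i, ‖a - α • v i‖ ^ 2
      = ‖a‖ ^ 2 - 2 * α * ⟪a, (Fintype.card ι : ℝ)⁻¹ • ∑ i, v i⟫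
        + α ^ 2 * ((Fintype.card ι : ℝ)⁻¹ * ∑ i, ‖v i‖ ^ 2) := by
  have hcard : (Fintype.card ι : ℝ) ≠ 0 := Nat.cast_ne_zero.2 Fintype.card_ne_zero
  simp only [norm_sub_sq_real, inner_smul_right, norm_smul, mul_pow, Real.norm_eq_abs, sq_abs,
    inner_sum, sum_add_distrib, sum_sub_distrib, sum_const, card_univ, nsmul_eq_mul, ← mul_sum]
  field_simp

theorem inv_card_mul_sum_norm_sub_mean_sq_le (u : ι → E) :
    (Fintype.card ι : ℝ)⁻¹ * ∑ i, ‖u i - (Fintype.card ι : ℝ)⁻¹ • ∑ j, u j‖ ^ 2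
      ≤ (Fintype.card ι : ℝ)⁻¹ * ∑ i, ‖u i‖ ^ 2 := by
  rcases isEmpty_or_nonempty ι with hι | hι
  · simp
  have h := inv_card_mul_sum_norm_sub_smul_sq ((Fintype.card ι : ℝ)⁻¹ • ∑ j, u j) 1 u
  set m := (Fintype.card ι : ℝ)⁻¹ • ∑ j, u j
  simp only [one_smul, one_pow, one_mul, mul_one, real_inner_self_eq_norm_sq] at h
  simp only [norm_sub_rev (u _) m, h]
  nlinarith [sq_nonneg ‖m‖]

theorem inv_card_mul_sum_norm_sub_add_mean_sq_le (p q : ι → E) :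
    (Fintype.card ι : ℝ)⁻¹ * ∑ i, ‖p i - q i + (Fintype.card ι : ℝ)⁻¹ • ∑ j, q j‖ ^ 2
      ≤ 2 * ((Fintype.card ι : ℝ)⁻¹ * ∑ i, ‖p i‖ ^ 2)
        + 2 * ((Fintype.card ι : ℝ)⁻¹ * ∑ i, ‖q i‖ ^ 2) := by
  set m := (Fintype.card ι : ℝ)⁻¹ • ∑ j, q j
  have hpoint : ∀ i, ‖p i - q i + m‖ ^ 2 ≤ 2 * ‖p i‖ ^ 2 + 2 * ‖q i - m‖ ^ 2 := fun i => by
    rw [sub_add]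
    linarith [(pow_le_pow_left₀ (norm_nonneg _) (norm_sub_le (p i) (q i - m)) 2).trans add_sq_le]
  calc (Fintype.card ι : ℝ)⁻¹ * ∑ i, ‖p i - q i + m‖ ^ 2
      ≤ (Fintype.card ι : ℝ)⁻¹ * ∑ i, (2 * ‖p i‖ ^ 2 + 2 * ‖q i - m‖ ^ 2) := by
        gcongr with i; exact hpoint i
    _ = 2 * ((Fintype.card ι : ℝ)⁻¹ * ∑ i, ‖p i‖ ^ 2)
        + 2 * ((Fintype.card ι : ℝ)⁻¹ * ∑ i, ‖q i - m‖ ^ 2) := by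
        rw [sum_add_distrib, ← mul_sum, ← mul_sum]; ring
    _ ≤ _ := by linarith [inv_card_mul_sum_norm_sub_mean_sq_le q]

end VectorAverage

variable [CompleteSpace E]

section SingleFunction

variable {g : E → ℝ} {g' : E} {x : E} {L : ℝ}

theorem HasGradientAt.fun_sum {ι : Type*} {s : Finset ι} {g : ι → E → ℝ} {g' : ι → E}
    (h : ∀ i ∈ s, HasGradientAt (g i) (g' i) x) :
    HasGradientAt (fun y => ∑ i ∈ s, g i y) (∑ i ∈ s, g' i) x := by
  rw [hasGradientAt_iff_hasFDerivAt, map_sum]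
  exact HasFDerivAt.fun_sum fun i hi => (h i hi).hasFDerivAt

theorem HasGradientAt.const_mul (c : ℝ) (h : HasGradientAt g g' x) :
    HasGradientAt (fun y => c * g y) (c • g') x := by
  rw [hasGradientAt_iff_hasFDerivAt, map_smul]
  exact h.hasFDerivAt.const_mul c

theorem hasDerivAt_comp_add_smul {v : E} {t : ℝ} (hg : DifferentiableAt ℝ g (x + t • v)) :
    HasDerivAt (fun s : ℝ => g (x + s • v)) ⟪∇ g (x + t • v), v⟫ t := by
  have hline : HasDerivAt (fun s : ℝ => x + s • v) v t := by
    simpa using ((hasDerivAt_id t).smul_const v).const_add x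
  simpa [Function.comp_def] using hg.hasGradientAt.hasFDerivAt.comp_hasDerivAt t hline

theorem ConvexOn.add_inner_gradient_le (hc : ConvexOn ℝ univ g) (hg : DifferentiableAt ℝ g x)
    (y : E) : g x + ⟪∇ g x, y - x⟫ ≤ g y := by
  have hline : ConvexOn ℝ univ fun t : ℝ => g (x + t • (y - x)) := by
    simpa [Function.comp_def, AffineMap.lineMap_apply_module', add_comm] using
      hc.comp_affineMap (AffineMap.lineMap x y)
  have hderiv : HasDerivAt (fun t : ℝ => g (x + t • (y - x))) ⟪∇ g x, y - x⟫ 0 := by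
    simpa only [zero_smul, add_zero] using
      hasDerivAt_comp_add_smul (v := y - x) (t := 0) (by simpa using hg)
  have := hline.le_slope_of_hasDerivAt (mem_univ 0) (mem_univ 1) zero_lt_one hderiv
  simp only [slope_def_field, zero_smul, one_smul, add_zero, add_sub_cancel, sub_zero,
    div_one] at this
  linarith

theorem Differentiable.le_add_inner_gradient_add_sq (hg : Differentiable ℝ g)
    (hlip : ∀ a b, ‖∇ g a - ∇ g b‖ ≤ L * ‖a - b‖) (x y : E) :
    g y ≤ g x + ⟪∇ g x, y - x⟫ + L / 2 * ‖y - x‖ ^ 2 := by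
  set v := y - x
  set ψ : ℝ → ℝ := fun t => g (x + t • v) - t * ⟪∇ g x, v⟫ - t ^ 2 / 2 * (L * ‖v‖ ^ 2)
  have hψ : ∀ t, HasDerivAt ψ (⟪∇ g (x + t • v) - ∇ g x, v⟫ - t * (L * ‖v‖ ^ 2)) t := by
    intro t
    refine (((hasDerivAt_comp_add_smul (hg _)).sub ((hasDerivAt_id t).mul_const _)).sub
      (((hasDerivAt_pow 2 t).div_const 2).mul_const _)).congr_deriv ?_
    norm_num [inner_sub_left]
  have hψ' : ∀ t ∈ Ioo (0 : ℝ) 1, ⟪∇ g (x + t • v) - ∇ g x, v⟫ - t * (L * ‖v‖ ^ 2) ≤ 0 := by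
    intro t ht
    have : ‖∇ g (x + t • v) - ∇ g x‖ ≤ L * (t * ‖v‖) := by
      simpa [norm_smul, abs_of_pos ht.1] using hlip (x + t • v) x
    nlinarith [real_inner_le_norm (∇ g (x + t • v) - ∇ g x) v, norm_nonneg v]
  have hanti : AntitoneOn ψ (Icc 0 1) := by
    refine antitoneOn_of_hasDerivWithinAt_nonpos (convex_Icc 0 1)
      (fun t _ => (hψ t).continuousAt.continuousWithinAt) (fun t _ => (hψ t).hasDerivWithinAt) ?_
    simpa only [interior_Icc] using hψ'
  have := hanti (left_mem_Icc.2 zero_le_one) (right_mem_Icc.2 zero_le_one) zero_le_one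
  simp only [ψ, v, zero_smul, one_smul, add_zero, add_sub_cancel] at this
  linarith

theorem ConvexOn.sq_norm_gradient_sub_le (hc : ConvexOn ℝ univ g) (hg : Differentiable ℝ g)
    (hlip : ∀ a b, ‖∇ g a - ∇ g b‖ ≤ L * ‖a - b‖) (x y : E) :
    ‖∇ g x - ∇ g y‖ ^ 2 ≤ 2 * L * (g x - g y - ⟪∇ g y, x - y⟫) := by
  rcases eq_or_ne x y with rfl | hxy
  · simp
  have hL : 0 ≤ L := by
    have := (norm_nonneg _).trans (hlip x y)
    exact nonneg_of_mul_nonneg_left this (norm_pos_iff.2 (sub_ne_zero.2 hxy))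
  rcases hL.eq_or_lt with rfl | hLpos
  · have : ‖∇ g x - ∇ g y‖ = 0 := le_antisymm (by simpa using hlip x y) (norm_nonneg _)
    simp [this]
  set u := ∇ g x - ∇ g y
  -- Compare `g` at `x - u / L` from above (descent from `x`) and from below (convexity at `y`).
  have habove := hg.le_add_inner_gradient_add_sq hlip x (x - L⁻¹ • u)
  have hbelow := hc.add_inner_gradient_le (hg y) (x - L⁻¹ • u)
  have hu : ⟪∇ g x, u⟫ - ⟪∇ g y, u⟫ = ‖u‖ ^ 2 := by
    rw [← inner_sub_left, real_inner_self_eq_norm_sq]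
  rw [sub_sub_cancel_left, norm_neg, norm_smul, Real.norm_of_nonneg (inv_nonneg.2 hLpos.le),
    inner_neg_right, real_inner_smul_right] at habove
  rw [sub_right_comm, inner_sub_right, real_inner_smul_right] at hbelow
  have hsq : L / 2 * (L⁻¹ * ‖u‖) ^ 2 = L⁻¹ * ‖u‖ ^ 2 / 2 := by field_simp
  have key : L⁻¹ * ‖u‖ ^ 2 ≤ 2 * (g x - g y - ⟪∇ g y, x - y⟫) := by
    linear_combination 2 * habove + 2 * hbelow + 2 * hsq - 2 * L⁻¹ * hu
  calc ‖u‖ ^ 2 = L * (L⁻¹ * ‖u‖ ^ 2) := by field_simp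
    _ ≤ L * (2 * (g x - g y - ⟪∇ g y, x - y⟫)) := by gcongr
    _ = _ := by ring

end SingleFunction

section FunctionAverage

variable {ι : Type*} [Fintype ι] {g : ι → E → ℝ} {f : E → ℝ} {L : ℝ}

theorem gradient_eq_inv_card_smul_sum (hd : ∀ i, Differentiable ℝ (g i))
    (hf : ∀ x, f x = (Fintype.card ι : ℝ)⁻¹ * ∑ i, g i x) (x : E) :
    ∇ f x = (Fintype.card ι : ℝ)⁻¹ • ∑ i, ∇ (g i) x := by
  obtain rfl : f = _ := funext hf
  exact ((HasGradientAt.fun_sum fun i _ => (hd i x).hasGradientAt).const_mul _).gradient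

theorem add_inner_gradient_le_of_eq_inv_card_mul_sum (hc : ∀ i, ConvexOn ℝ univ (g i))
    (hd : ∀ i, Differentiable ℝ (g i)) (hf : ∀ x, f x = (Fintype.card ι : ℝ)⁻¹ * ∑ i, g i x)
    (x y : E) : f x + ⟪∇ f x, y - x⟫ ≤ f y := by
  rw [hf, hf, gradient_eq_inv_card_smul_sum hd hf, real_inner_smul_left, sum_inner, ← mul_add,
    ← sum_add_distrib]
  gcongr with i
  exact (hc i).add_inner_gradient_le (hd i x) y

theorem inv_card_mul_sum_sq_norm_gradient_sub_le (hc : ∀ i, ConvexOn ℝ univ (g i))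
    (hd : ∀ i, Differentiable ℝ (g i)) (hlip : ∀ i a b, ‖∇ (g i) a - ∇ (g i) b‖ ≤ L * ‖a - b‖)
    (hf : ∀ x, f x = (Fintype.card ι : ℝ)⁻¹ * ∑ i, g i x) (x y : E) :
    (Fintype.card ι : ℝ)⁻¹ * ∑ i, ‖∇ (g i) x - ∇ (g i) y‖ ^ 2
      ≤ 2 * L * (f x - f y - ⟪∇ f y, x - y⟫) :=
  calc (Fintype.card ι : ℝ)⁻¹ * ∑ i, ‖∇ (g i) x - ∇ (g i) y‖ ^ 2
      ≤ (Fintype.card ι : ℝ)⁻¹ * ∑ i, 2 * L * (g i x - g i y - ⟪∇ (g i) y, x - y⟫) := by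
        gcongr with i
        exact (hc i).sq_norm_gradient_sub_le (hd i) (hlip i) x y
    _ = 2 * L * (f x - f y - ⟪∇ f y, x - y⟫) := by
        rw [hf, hf, gradient_eq_inv_card_smul_sum hd hf, real_inner_smul_left, sum_inner,
          ← mul_sum, sum_sub_distrib, sum_sub_distrib]
        ring

theorem inv_card_smul_sum_svrg_eq_gradient [Nonempty ι] (hd : ∀ i, Differentiable ℝ (g i))
    (hf : ∀ x, f x = (Fintype.card ι : ℝ)⁻¹ * ∑ i, g i x) (w wt : E) :
    (Fintype.card ι : ℝ)⁻¹ • ∑ i, (∇ (g i) w - ∇ (g i) wt + ∇ f wt) = ∇ f w := by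
  have hcard : (Fintype.card ι : ℝ) ≠ 0 := Nat.cast_ne_zero.2 Fintype.card_ne_zero
  rw [sum_add_distrib, sum_sub_distrib, sum_const, card_univ, ← Nat.cast_smul_eq_nsmul ℝ,
    smul_add, smul_sub, smul_smul, inv_mul_cancel₀ hcard, one_smul,
    ← gradient_eq_inv_card_smul_sum hd hf, ← gradient_eq_inv_card_smul_sum hd hf, sub_add_cancel]

theorem inv_card_mul_sum_sq_norm_svrg_le (hc : ∀ i, ConvexOn ℝ univ (g i))
    (hd : ∀ i, Differentiable ℝ (g i)) (hlip : ∀ i a b, ‖∇ (g i) a - ∇ (g i) b‖ ≤ L * ‖a - b‖)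
    (hf : ∀ x, f x = (Fintype.card ι : ℝ)⁻¹ * ∑ i, g i x) {y : E} (hy : ∇ f y = 0) (w wt : E) :
    (Fintype.card ι : ℝ)⁻¹ * ∑ i, ‖∇ (g i) w - ∇ (g i) wt + ∇ f wt‖ ^ 2
      ≤ 4 * L * (f w - f y) + 4 * L * (f wt - f y) := by
  have hmean : ∇ f wt = (Fintype.card ι : ℝ)⁻¹ • ∑ i, (∇ (g i) wt - ∇ (g i) y) := by
    rw [sum_sub_distrib, smul_sub, ← gradient_eq_inv_card_smul_sum hd hf,
      ← gradient_eq_inv_card_smul_sum hd hf, hy, sub_zero]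
  have hsplit : ∀ i, ∇ (g i) w - ∇ (g i) wt = (∇ (g i) w - ∇ (g i) y) - (∇ (g i) wt - ∇ (g i) y) :=
    fun i => (sub_sub_sub_cancel_right _ _ _).symm
  have hw := inv_card_mul_sum_sq_norm_gradient_sub_le hc hd hlip hf w y
  have hwt := inv_card_mul_sum_sq_norm_gradient_sub_le hc hd hlip hf wt y
  rw [hy, inner_zero_left, sub_zero] at hw hwt
  rw [hmean]
  simp only [hsplit]
  linarith [inv_card_mul_sum_norm_sub_add_mean_sq_le (fun i => ∇ (g i) w - ∇ (g i) y)
    (fun i => ∇ (g i) wt - ∇ (g i) y)]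

end FunctionAverage

/-- **Single-step expected distance-decrease inequality for the SVRG update.**
If each `f_i : ℝ^d → ℝ` is convex and differentiable with `L`-Lipschitz gradient,
`f = (1/N)·Σᵢ fᵢ`, `w*` is a global minimizer of `f`, and `α > 0`, then for every
`w, w̃`, `(1/N)·Σᵢ ‖w − α(∇fᵢ(w) − ∇fᵢ(w̃) + ∇f(w̃)) − w*‖²
  ≤ ‖w − w*‖² − 2α(1 − 2Lα)(f(w) − f(w*)) + 4Lα²(f(w̃) − f(w*))`. -/
theorem svrg_step_distance_decrease {d N : ℕ} (L α : ℝ)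
    (fi : Fin N → EuclideanSpace ℝ (Fin d) → ℝ)
    (f : EuclideanSpace ℝ (Fin d) → ℝ)
    (hconv : ∀ i, ConvexOn ℝ Set.univ (fi i))
    (hdiff : ∀ i, Differentiable ℝ (fi i))
    (hlip : ∀ i x y, ‖gradient (fi i) x - gradient (fi i) y‖ ≤ L * ‖x - y‖)
    (hf : ∀ x, f x = (N : ℝ)⁻¹ * ∑ i, fi i x)
    (wstar : EuclideanSpace ℝ (Fin d))
    (hmin : ∀ x, f wstar ≤ f x)
    (hα : 0 < α) :
    ∀ w wt, (N : ℝ)⁻¹ *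
        ∑ i, ‖w - α • (gradient (fi i) w - gradient (fi i) wt + gradient f wt) - wstar‖ ^ 2
      ≤ ‖w - wstar‖ ^ 2 - 2 * α * (1 - 2 * L * α) * (f w - f wstar)
        + 4 * L * α ^ 2 * (f wt - f wstar) := by
  intro w wt
  rcases isEmpty_or_nonempty (Fin N) with hN | hN
  · simp [hf]
  have hf' : ∀ x, f x = (Fintype.card (Fin N) : ℝ)⁻¹ * ∑ i, fi i x := by simpa using hf
  have hloc : IsLocalMin f wstar := Filter.Eventually.of_forall hmin
  have hstar : ∇ f wstar = 0 := by rw [gradient, hloc.fderiv_eq_zero, map_zero]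
  have hexpand := inv_card_mul_sum_norm_sub_smul_sq (w - wstar) α
    fun i => ∇ (fi i) w - ∇ (fi i) wt + ∇ f wt
  rw [inv_card_smul_sum_svrg_eq_gradient hdiff hf'] at hexpand
  have hvar := inv_card_mul_sum_sq_norm_svrg_le hconv hdiff hlip hf' hstar w wt
  have hfirst : f w - f wstar ≤ ⟪w - wstar, ∇ f w⟫ := by
    have := add_inner_gradient_le_of_eq_inv_card_mul_sum hconv hdiff hf' w wstar
    rw [real_inner_comm, ← neg_sub, inner_neg_left] at this
    linarith
  simp only [Fintype.card_fin] at hexpand hvar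
  simp only [sub_right_comm w _ wstar, hexpand]
  linarith [mul_le_mul_of_nonneg_left hvar (sq_nonneg α), mul_le_mul_of_nonneg_left hfirst hα.le]
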